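/- arXiv:1701.04506 — 2 statements merged into one kernel-verified Lean document; each statement's English description precedes it below -/
import Mathlib

section
/- Every nonzero natural number N has a unique representation in a negative integer base B ≤ -2 using digits in {0, 1, ..., |B|-1}: there exist digits d_0, ..., d_k with d_k ≠ 0 such that N = Σ d_i · B^i. -/
/-!
Euclidean division by `B` with remainder in `[0, |B|)` writes `n = d + B * q`; the remainder is
the lowest digit and the digits of `q` follow. For `B ≤ -2` this recursion terminates on every
integer, which gives existence. Uniqueness holds in every base: the remainder modulo `B`
determines the lowest digit, and cancelling `B` leaves two representations of the same number.
-/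

def intOfDigits (B : ℤ) : List ℤ → ℤ
  | [] => 0
  | d :: L => d + B * intOfDigits B L

def IsNormalDigits (B : ℤ) (L : List ℤ) : Prop :=
  (∀ d ∈ L, 0 ≤ d ∧ d < |B|) ∧ L.getLast? ≠ some 0

theorem sum_getD_mul_pow_eq_intOfDigits (B : ℤ) (L : List ℤ) :
    ∑ i ∈ Finset.range L.length, L.getD i 0 * B ^ i = intOfDigits B L := by
  induction L with
  | nil => rfl
  | cons d L ih =>
    simp only [List.length_cons, Finset.sum_range_succ', List.getD_cons_succ, List.getD_cons_zero,
      pow_succ, pow_zero, mul_one, intOfDigits, ← ih, Finset.mul_sum]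
    rw [add_comm]
    congr 1
    exact Finset.sum_congr rfl fun i _ => by ring

theorem eq_and_eq_of_add_mul_eq_add_mul {B d d' v v' : ℤ} (hd : 0 ≤ d ∧ d < |B|)
    (hd' : 0 ≤ d' ∧ d' < |B|) (h : d + B * v = d' + B * v') : d = d' ∧ v = v' := by
  have digit_eq (x y : ℤ) (hx : 0 ≤ x ∧ x < |B|) : (x + B * y) % B = x := by
    rw [Int.add_mul_emod_self_left, ← Int.emod_abs, Int.emod_eq_of_lt hx.1 hx.2]
  have hdd' : d = d' := by rw [← digit_eq d v hd, h, digit_eq d' v' hd']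
  have hB : B ≠ 0 := by rintro rfl; simp at hd; omega
  subst hdd'
  exact ⟨rfl, mul_left_cancel₀ hB (add_left_cancel h)⟩

namespace IsNormalDigits

variable {B d : ℤ} {L M : List ℤ}

theorem nil (B : ℤ) : IsNormalDigits B [] := by
  simp [IsNormalDigits]

theorem of_cons (h : IsNormalDigits B (d :: L)) : IsNormalDigits B L := by
  refine ⟨fun x hx => h.1 x (List.mem_cons_of_mem d hx), ?_⟩
  cases L with
  | nil => simp
  | cons a L => simpa [List.getLast?_cons_cons] using h.2

theorem digit_of_cons (h : IsNormalDigits B (d :: L)) : 0 ≤ d ∧ d < |B| :=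
  h.1 d List.mem_cons_self

theorem cons (hd : 0 ≤ d ∧ d < |B|) (hL : IsNormalDigits B L) (hdL : d ≠ 0 ∨ L ≠ []) :
    IsNormalDigits B (d :: L) := by
  refine ⟨by simpa [List.forall_mem_cons] using And.intro hd hL.1, ?_⟩
  cases L with
  | nil => simpa using hdL
  | cons a L => simpa [List.getLast?_cons_cons] using hL.2

theorem eq_nil_of_intOfDigits_eq_zero (hL : IsNormalDigits B L) (h0 : intOfDigits B L = 0) :
    L = [] := by
  induction L with
  | nil => rfl
  | cons d L ih =>
    obtain ⟨rfl, hv⟩ := eq_and_eq_of_add_mul_eq_add_mul (v' := 0) hL.digit_of_cons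
      ⟨le_rfl, hL.digit_of_cons.1.trans_lt hL.digit_of_cons.2⟩ (by simpa [intOfDigits] using h0)
    obtain rfl := ih hL.of_cons hv
    simpa using hL.2

theorem eq_of_intOfDigits_eq (hL : IsNormalDigits B L) (hM : IsNormalDigits B M)
    (h : intOfDigits B L = intOfDigits B M) : L = M := by
  induction L generalizing M with
  | nil => exact (hM.eq_nil_of_intOfDigits_eq_zero h.symm).symm
  | cons d L ih =>
    cases M with
    | nil => exact hL.eq_nil_of_intOfDigits_eq_zero h
    | cons d' M =>
      obtain ⟨rfl, hv⟩ := eq_and_eq_of_add_mul_eq_add_mul hL.digit_of_cons hM.digit_of_cons h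
      rw [ih hL.of_cons hM.of_cons hv]

end IsNormalDigits

/-- Since `-1 = (|B| - 1) + B * 1`, the absolute value alone does not decrease along `n ↦ n / B`;
the extra unit for negative `n` repairs this. -/
def negBaseSize (n : ℤ) : ℕ :=
  2 * n.natAbs + if n < 0 then 1 else 0

theorem negBaseSize_ediv_lt {B n : ℤ} (hB : B ≤ -2) (hn : n ≠ 0) :
    negBaseSize (n / B) < negBaseSize n := by
  have hdiv := Int.emod_add_mul_ediv n B
  have hd0 := Int.emod_nonneg n (by omega : B ≠ 0)
  have hdB : n % B < -B := abs_of_neg (by omega : B < 0) ▸ Int.emod_lt_abs n (by omega)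
  set q := n / B
  set d := n % B
  rcases lt_or_gt_of_ne hn with hneg | hpos
  · have hq : 0 < q := by nlinarith
    have : q ≤ -n := by nlinarith
    simp only [negBaseSize]
    split_ifs <;> omega
  · have hq : q ≤ 0 := by nlinarith
    have : -2 * q ≤ n := by nlinarith
    simp only [negBaseSize]
    split_ifs <;> omega

theorem exists_isNormalDigits_intOfDigits_eq {B : ℤ} (hB : B ≤ -2) (n : ℤ) :
    ∃ L, IsNormalDigits B L ∧ intOfDigits B L = n := by
  induction h : negBaseSize n using Nat.strong_induction_on generalizing n with
  | _ k ih =>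
    subst h
    rcases eq_or_ne n 0 with rfl | hn
    · exact ⟨[], .nil B, rfl⟩
    obtain ⟨L, hL, hLq⟩ := ih _ (negBaseSize_ediv_lt hB hn) (n / B) rfl
    have hd : 0 ≤ n % B ∧ n % B < |B| :=
      ⟨Int.emod_nonneg n (by omega), Int.emod_lt_abs n (by omega)⟩
    refine ⟨n % B :: L, hL.cons hd ?_, by rw [intOfDigits, hLq, Int.emod_add_mul_ediv]⟩
    by_contra! h
    obtain ⟨hd0, rfl⟩ := h
    exact hn (by simpa [intOfDigits, ← hLq, hd0] using (Int.emod_add_mul_ediv n B).symm)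

/-- Every nonzero natural number has a unique representation in a negative
integer base `B ≤ -2` with digits in `{0,…,|B|-1}` and nonzero leading digit. -/
theorem negative_base_unique_representation (B : ℤ) (hB : B ≤ -2) (N : ℕ) (hN : N ≠ 0) :
    ∃! L : List ℤ,
      (∀ d ∈ L, 0 ≤ d ∧ d < |B|) ∧ L ≠ [] ∧ L.getLast? ≠ some 0 ∧
      (N : ℤ) = ∑ i ∈ Finset.range L.length, L.getD i 0 * B ^ i := by
  simp only [sum_getD_mul_pow_eq_intOfDigits]
  obtain ⟨L, hL, hLN⟩ := exists_isNormalDigits_intOfDigits_eq hB N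
  have hL_ne_nil : L ≠ [] := by
    rintro rfl
    exact hN (by simpa [intOfDigits] using hLN.symm)
  refine ⟨L, ⟨hL.1, hL_ne_nil, hL.2, hLN.symm⟩, ?_⟩
  rintro M ⟨hM_digits, -, hM_last, hMN⟩
  exact IsNormalDigits.eq_of_intOfDigits_eq ⟨hM_digits, hM_last⟩ hL (hMN ▸ hLN.symm)
end

section
/- Negative beta expansion identity: for B > 1 real and x ∈ [l_B, r_B), x = Σ_{j=1}^{∞} d_j (-B)^{-j} where d_j = ⌊-B·T_B^{j-1}(x) - l_B⌋ and T_B(x) = -Bx - ⌊-Bx - l_B⌋, l_B = -B/(B+1), r_B = 1/(B+1). -/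
/-!
Writing `y n = T^[n] x`, the definitions give `y (n + 1) = -B * y n - d n`, so
`d n * (-B) ^ (-(n + 1)) = (-B) ^ (-n) * y n - (-B) ^ (-(n + 1)) * y (n + 1)` and the series
telescopes to `y 0 = x`. For `n ≥ 1` the iterates lie in `[l, l + 1)`, so `(-B) ^ (-n) * y n`
is dominated by a geometric series; this absolute summability makes the telescoping sum
converge unconditionally.
-/

open Finset

theorem Summable.hasSum_sub_add_one {G : Type*} [AddCommGroup G] [TopologicalSpace G]
    [IsTopologicalAddGroup G] [T2Space G] {g : ℕ → G} (hg : Summable g) :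
    HasSum (fun n ↦ g n - g (n + 1)) (g 0) := by
  have hshift : HasSum (fun n ↦ g (n + 1)) (∑' n, g n - ∑ i ∈ range 1, g i) :=
    (hasSum_nat_add_iff' 1).mpr hg.hasSum
  simpa using hg.hasSum.sub hshift

theorem sub_floor_sub_mem_Ico {α : Type*} [Ring α] [LinearOrder α] [IsStrictOrderedRing α]
    [FloorRing α] (z l : α) : z - ⌊z - l⌋ ∈ Set.Ico l (l + 1) := by
  have hfract : z - ⌊z - l⌋ = Int.fract (z - l) + l := by
    rw [← Int.self_sub_floor]; abel
  rw [hfract]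
  exact ⟨le_add_of_nonneg_left (Int.fract_nonneg _),
    by simpa only [add_comm l] using add_lt_add_right (Int.fract_lt_one (z - l)) l⟩

section DigitExpansion

variable {𝕜 : Type*} [NormedField 𝕜] {β : 𝕜} {y d : ℕ → 𝕜}

theorem digit_mul_zpow_eq_sub (hβ : β ≠ 0) (hy : ∀ n, y (n + 1) = β * y n - d n) (n : ℕ) :
    d n * β ^ (-(n + 1 : ℤ)) = β ^ (-(n : ℤ)) * y n - β ^ (-((n + 1 : ℕ) : ℤ)) * y (n + 1) := by
  rw [hy, mul_sub, ← mul_assoc, Nat.cast_succ, neg_add, zpow_add₀ hβ, zpow_neg_one,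
    mul_assoc _ β⁻¹ β, inv_mul_cancel₀ hβ, mul_one]
  ring

theorem summable_zpow_neg_mul_of_norm_le [CompleteSpace 𝕜] (hβ : 1 < ‖β‖) {C : ℝ}
    (hC : ∀ n, ‖y n‖ ≤ C) : Summable fun n : ℕ ↦ β ^ (-(n : ℤ)) * y n := by
  have hr : ‖β‖⁻¹ < 1 := inv_lt_one_of_one_lt₀ hβ
  refine ((summable_geometric_of_lt_one (by positivity) hr).mul_left C).of_norm_bounded
    fun n ↦ ?_
  rw [norm_mul, norm_zpow, zpow_neg, zpow_natCast, ← inv_pow, mul_comm]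
  exact mul_le_mul_of_nonneg_right (hC n) (by positivity)

theorem hasSum_digit_mul_zpow [CompleteSpace 𝕜] (hβ : 1 < ‖β‖)
    (hy : ∀ n, y (n + 1) = β * y n - d n) {C : ℝ} (hC : ∀ n, ‖y n‖ ≤ C) :
    HasSum (fun n : ℕ ↦ d n * β ^ (-(n + 1 : ℤ))) (y 0) := by
  have hβ0 : β ≠ 0 := norm_pos_iff.mp (one_pos.trans hβ)
  simpa only [← digit_mul_zpow_eq_sub hβ0 hy, Nat.cast_zero, neg_zero, zpow_zero, one_mul] using
    (summable_zpow_neg_mul_of_norm_le hβ hC).hasSum_sub_add_one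

end DigitExpansion

theorem neg_beta_expansion_general (B : ℝ) (hB : 1 < B) (l : ℝ)
    (T : ℝ → ℝ) (hT : ∀ y, T y = -B * y - ⌊-B * y - l⌋)
    (x : ℝ)
    (d : ℕ → ℤ) (hd : ∀ j, d j = ⌊-B * (T^[j] x) - l⌋) :
    x = ∑' j : ℕ, (d j : ℝ) * (-B) ^ (-(j + 1 : ℤ)) := by
  have hrec : ∀ n, T^[n + 1] x = -B * T^[n] x - d n := fun n ↦ by
    rw [Function.iterate_succ_apply', hT, hd]
  have hbound : ∀ n, ‖T^[n] x‖ ≤ max |x| (max |l| |l + 1|) := by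
    rintro (_ | n)
    · exact le_max_left _ _
    · rw [Function.iterate_succ_apply', hT]
      obtain ⟨hlo, hhi⟩ := sub_floor_sub_mem_Ico (-B * T^[n] x) l
      exact (abs_le_max_abs_abs hlo hhi.le).trans (le_max_right _ _)
  have hB' : 1 < ‖-B‖ := by rwa [norm_neg, Real.norm_of_nonneg (by linarith)]
  exact (hasSum_digit_mul_zpow hB' hrec hbound).tsum_eq.symm

/-- Negative beta expansion identity (Ito–Sadahiro): for `B > 1` and
`x ∈ [l_B, r_B)`, `x = Σ_{j≥1} d_j (-B)^{-j}` where `d_j` is the digit of the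
`(j-1)`-st iterate of the negative beta transformation. -/
theorem neg_beta_expansion (B : ℝ) (hB : 1 < B) (l : ℝ) (hl : l = -B / (B + 1))
    (T : ℝ → ℝ) (hT : ∀ y, T y = -B * y - ⌊-B * y - l⌋)
    (x : ℝ) (hx : l ≤ x ∧ x < 1 / (B + 1))
    (d : ℕ → ℤ) (hd : ∀ j, d j = ⌊-B * (T^[j] x) - l⌋) :
    x = ∑' j : ℕ, (d j : ℝ) * (-B) ^ (-(j + 1 : ℤ)) :=
  neg_beta_expansion_general B hB l T hT x d hd
end
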